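/- Let X be a sober topological space with countable open set lattice such that (X, ≥), the dual of the specialization order, is a dcpo. Then the open set lattice O(X) is a continuous lattice if and only if (X, ≥) is a quasicontinuous dcpo. -/

import Mathlib

open Set

section RelDefs
variable {α : Type*} (r : α → α → Prop)

/-- `D` is a (nonempty) directed subset with respect to the relation `r`. -/
def DirOn (D : Set α) : Prop :=
  D.Nonempty ∧ ∀ a ∈ D, ∀ b ∈ D, ∃ c ∈ D, r a c ∧ r b c

/-- `s` is a least upper bound of `D` with respect to `r`. -/
def IsLubR (D : Set α) (s : α) : Prop :=
  (∀ d ∈ D, r d s) ∧ ∀ u, (∀ d ∈ D, r d u) → r s u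

/-- `x` is way-below `y` with respect to `r`. -/
def WB (x y : α) : Prop :=
  ∀ D : Set α, DirOn r D → ∀ s, IsLubR r D s → r y s → ∃ d ∈ D, r x d

/-- Every directed subset has a least upper bound (dcpo property). -/
def DcpoRel : Prop := ∀ D : Set α, DirOn r D → ∃ s, IsLubR r D s

/-- Continuity: every element is the directed least upper bound of the elements way-below it. -/
def ContinuousRel : Prop :=
  ∀ y, DirOn r {x | WB r x y} ∧ IsLubR r {x | WB r x y} y

/-- Algebraicity: every element is the directed least upper bound of
the compact elements (`WB r x x`) below it. -/
def AlgebraicRel : Prop :=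
  ∀ y, DirOn r {x | WB r x x ∧ r x y} ∧ IsLubR r {x | WB r x x ∧ r x y} y

/-- Upper set generated by `F` with respect to `r`. -/
def UpS (F : Set α) : Set α := {x | ∃ f ∈ F, r f x}

/-- The set `F` is way-below the set `G` with respect to `r`. -/
def SetWB (F G : Set α) : Prop :=
  ∀ D : Set α, DirOn r D → ∀ s, IsLubR r D s → s ∈ UpS r G → ∃ d ∈ D, d ∈ UpS r F

/-- Finite sets way-below `x`. -/
def FinFam (x : α) : Set (Finset α) := {F | SetWB r (F : Set α) {x}}

/-- Finite sets `F` with `F ≪ F ≪ x`. -/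
def FinFamC (x : α) : Set (Finset α) :=
  {F | SetWB r (F : Set α) (F : Set α) ∧ SetWB r (F : Set α) {x}}

/-- Directedness of a family of finite sets in the Smyth preorder
(`F ⊑ G` iff `G ⊆ ↑F`). -/
def SmythDirected (S : Set (Finset α)) : Prop :=
  S.Nonempty ∧ ∀ F ∈ S, ∀ G ∈ S, ∃ H ∈ S,
    (H : Set α) ⊆ UpS r (F : Set α) ∧ (H : Set α) ⊆ UpS r (G : Set α)

/-- Quasicontinuity with respect to `r`. -/
def QuasicontinuousRel : Prop :=
  ∀ x, SmythDirected r (FinFam r x) ∧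
    UpS r {x} = ⋂ F ∈ FinFam r x, UpS r (F : Set α)

/-- Quasialgebraicity with respect to `r`. -/
def QuasialgebraicRel : Prop :=
  ∀ x, SmythDirected r (FinFamC r x) ∧
    UpS r {x} = ⋂ F ∈ FinFamC r x, UpS r (F : Set α)

/-- `U` is Scott open with respect to `r`: an upper set inaccessible by
least upper bounds of directed sets. -/
def IsScottOpenRel (U : Set α) : Prop :=
  (∀ x ∈ U, ∀ y, r x y → y ∈ U) ∧
    ∀ D : Set α, DirOn r D → ∀ s, IsLubR r D s → s ∈ U → ∃ d ∈ D, d ∈ U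

end RelDefs

section Spec
variable {X : Type*} [TopologicalSpace X]

/-- The specialization order: `x ≤ y` iff `x ∈ cl {y}`. -/
def sle (x y : X) : Prop := x ∈ closure ({y} : Set X)

/-- The maximal elements of `C` with respect to the specialization order. -/
def maxSpec (C : Set X) : Set X := {c | c ∈ C ∧ ∀ y ∈ C, sle c y → sle y c}

end Spec

/-!
Write `≤` for the specialization order. Two facts about a sober space `X` with countably many
open sets carry the proof.

First, every closed set `C` is the union of the closures of its finitely many maximal points.
These points form an antichain. If there were infinitely many, a diagonal argument over the
countably many open sets would give an infinite subset `B` on which every open set has finite or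
cofinite trace; by Cantor's theorem only finitely many points of `B` are isolated in `B`, and the
remaining ones form an irreducible set. The generic point of its closure lies in `C` above all of
them, so by maximality they would all coincide.

Second, for open `U` and `V`, `U ≪ V` in `O(X)` holds iff every subset of `U` directed for `≥`
has its supremum in `V`. One direction tests `U ≪ V` against the directed family of the sets
`(closure {d})ᶜ`. For the other, countability reduces a directed family of open sets to an
increasing sequence `Wₙ`; given points `zₙ ∈ U \ Wₙ`, Ramsey's theorem gives a subsequence that
increases for `≥`, and then has a supremum in the dcpo, or decreases for `≥`, or is an antichain.
In the last two cases an irreducible set lies in the closure of every tail, and the generic point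
of its closure is a supremum of the required kind.

Then a finite `F ≪ {x}` is read off from the complement of an open `U ≪ (closure {x})ᶜ`, and
conversely the sets `F ≪ {g}`, for the finitely many maximal points `g` of `Vᶜ`, cut out an open
neighbourhood `U ≪ V` of any given point of `V`.
-/

open Filter

section Order

variable {α : Type*} {r : α → α → Prop}

theorem dirOn_singleton (hr : ∀ a, r a a) (a : α) : DirOn r {a} :=
  ⟨singleton_nonempty a, fun _ hb _ hc => ⟨a, rfl, hb ▸ hr a, hc ▸ hr a⟩⟩

theorem isLubR_singleton (hr : ∀ a, r a a) (a : α) : IsLubR r {a} a :=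
  ⟨fun _ hb => hb ▸ hr a, fun _ h => h a rfl⟩

end Order

section Combinatorics

theorem Filter.exists_seq_tendsto_forall_eventually_mem_or_notMem {α : Type*} (l : Filter α)
    [l.IsCountablyGenerated] [l.NeBot] {𝒰 : Set (Set α)} (h𝒰 : 𝒰.Countable) :
    ∃ x : ℕ → α, Tendsto x atTop l ∧
      ∀ U ∈ 𝒰, (∀ᶠ n in atTop, x n ∈ U) ∨ ∀ᶠ n in atTop, x n ∉ U := by
  classical
  have : Countable 𝒰 := h𝒰.to_subtype
  -- an ultrafilter finer than `l` picks, for each `U`, the side of `U` that `x` must end up in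
  let 𝒱 := Ultrafilter.of l
  let side : Set α → Set α := fun U => if U ∈ 𝒱 then U else Uᶜ
  have hside : ∀ U, side U ∈ 𝒱 := fun U => by
    by_cases hU : U ∈ 𝒱 <;> simp [side, hU, Ultrafilter.compl_mem_iff_notMem]
  have : (l ⊓ ⨅ U : 𝒰, 𝓟 (side U)).NeBot :=
    (Ultrafilter.neBot 𝒱).mono
      (le_inf (Ultrafilter.of_le l) (le_iInf fun U => by simpa using hside U))
  obtain ⟨x, hx⟩ := exists_seq_tendsto (l ⊓ ⨅ U : 𝒰, 𝓟 (side U))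
  refine ⟨x, hx.mono_right inf_le_left, fun U hU => ?_⟩
  have hxU := tendsto_principal.1 (hx.mono_right (inf_le_right.trans (iInf_le _ ⟨U, hU⟩)))
  by_cases hU𝒱 : U ∈ 𝒱
  · exact Or.inl (by simpa [side, hU𝒱] using hxU)
  · exact Or.inr (by simpa [side, hU𝒱] using hxU)

theorem Set.Infinite.exists_infinite_subset_finite_inter_or_finite_diff {α : Type*} {A : Set α}
    (hA : A.Infinite) {𝒰 : Set (Set α)} (h𝒰 : 𝒰.Countable) :
    ∃ B ⊆ A, B.Infinite ∧ ∀ U ∈ 𝒰, (B ∩ U).Finite ∨ (B \ U).Finite := by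
  let e : ℕ → α := (↑) ∘ hA.natEmbedding A
  have he : Function.Injective e := Subtype.val_injective.comp (hA.natEmbedding A).injective
  obtain ⟨x, hx, hx𝒰⟩ := (map e atTop).exists_seq_tendsto_forall_eventually_mem_or_notMem h𝒰
  have hcof : Tendsto x atTop cofinite :=
    hx.trans (Nat.cofinite_eq_atTop ▸ he.tendsto_cofinite)
  obtain ⟨N, hN⟩ := eventually_atTop.1
    (hx.eventually (eventually_map.2 (Eventually.of_forall fun n => (hA.natEmbedding A n).2)))
  have htail : ∀ T : Set α, (∀ᶠ n in atTop, x n ∈ T) → (x '' Ici N \ T).Finite := by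
    intro T hT
    obtain ⟨M, hM⟩ := eventually_atTop.1 hT
    refine ((finite_Iio M).image x).subset ?_
    rintro _ ⟨⟨n, -, rfl⟩, hnT⟩
    exact ⟨n, lt_of_not_ge fun h => hnT (hM n h), rfl⟩
  refine ⟨x '' Ici N, ?_, fun hfin => ?_, fun U hU => ?_⟩
  · rintro _ ⟨n, hn, rfl⟩
    exact hN n hn
  · obtain ⟨n, hn, hnot⟩ :=
      ((eventually_ge_atTop N).and (hcof.eventually hfin.compl_mem_cofinite)).exists
    exact hnot ⟨n, hn, rfl⟩
  · rcases hx𝒰 U hU with h | h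
    · exact Or.inr (htail U h)
    · exact Or.inl (by simpa [sdiff_compl] using htail Uᶜ h)

end Combinatorics

section Specialization

variable {X : Type*} [TopologicalSpace X]

theorem sle_flip_eq_specializes : (fun x y : X => sle y x) = (· ⤳ ·) := by
  funext x y
  exact propext specializes_iff_mem_closure.symm

theorem mem_maxSpec_iff {C : Set X} {m : X} :
    m ∈ maxSpec C ↔ m ∈ C ∧ ∀ y ∈ C, y ⤳ m → m ⤳ y := by
  simp [maxSpec, sle, specializes_iff_mem_closure]

theorem upS_specializes_eq_biUnion (F : Set X) : UpS (· ⤳ ·) F = ⋃ f ∈ F, closure {f} := by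
  ext y
  simp [UpS, specializes_iff_mem_closure]

theorem upS_specializes_singleton (x : X) : UpS (· ⤳ ·) {x} = closure {x} := by
  simp [upS_specializes_eq_biUnion]

theorem isClosed_upS_specializes {F : Set X} (hF : F.Finite) : IsClosed (UpS (· ⤳ ·) F) := by
  rw [upS_specializes_eq_biUnion]
  exact hF.isClosed_biUnion fun _ _ => isClosed_closure

theorem subset_upS_specializes (F : Set X) : F ⊆ UpS (· ⤳ ·) F :=
  fun f hf => ⟨f, hf, specializes_rfl⟩

theorem mem_upS_of_specializes {F : Set X} {y z : X} (hy : y ∈ UpS (· ⤳ ·) F) (h : y ⤳ z) :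
    z ∈ UpS (· ⤳ ·) F :=
  let ⟨f, hf, hfy⟩ := hy
  ⟨f, hf, hfy.trans h⟩

theorem DirectedOn.isPreirreducible {S : Set X} (h : DirectedOn (fun a b => b ⤳ a) S) :
    IsPreirreducible S := by
  rintro U V hU hV ⟨a, haS, haU⟩ ⟨b, hbS, hbV⟩
  obtain ⟨c, hcS, hca, hcb⟩ := h a haS b hbS
  exact ⟨c, hcS, hca.mem_open hU haU, hcb.mem_open hV hbV⟩

theorem IsClosed.exists_mem_maxSpec_specializes [QuasiSober X] {C : Set X} (hC : IsClosed C)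
    {x : X} (hx : x ∈ C) : ∃ m ∈ maxSpec C, m ⤳ x := by
  let := specializationPreorder X
  -- a chain is directed, hence irreducible, and the generic point of its closure bounds it
  have hchain : ∀ c ⊆ C, IsChain (· ≤ ·) c → ∀ y ∈ c, ∃ g ∈ C, ∀ z ∈ c, z ≤ g := by
    intro c hcC hc y hy
    obtain ⟨g, hg⟩ := QuasiSober.sober
      (IsIrreducible.closure ⟨⟨y, hy⟩, hc.directedOn.isPreirreducible⟩) isClosed_closure
    exact ⟨g, hC.closure_subset_iff.2 hcC hg.mem, fun z hz => hg.specializes (subset_closure hz)⟩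
  obtain ⟨m, hxm, hm⟩ := zorn_le_nonempty₀ C hchain x hx
  exact ⟨m, mem_maxSpec_iff.2 ⟨hm.prop, fun y hy hym => hm.2 hy hym⟩, hxm⟩

theorem isAntichain_maxSpec [T0Space X] (C : Set X) : IsAntichain (· ⤳ ·) (maxSpec C) := by
  intro a ha b hb hab h
  exact hab (h.antisymm ((mem_maxSpec_iff.1 hb).2 a (mem_maxSpec_iff.1 ha).1 h)).eq

end Specialization

section CountablyManyOpens

variable {X : Type*} [TopologicalSpace X]

def HasCofiniteOpenTraces (S : Set X) : Prop :=
  ∀ U, IsOpen U → (S ∩ U).Nonempty → (S \ U).Finite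

theorem HasCofiniteOpenTraces.isIrreducible {S : Set X} (h : HasCofiniteOpenTraces S)
    (hS : S.Infinite) : IsIrreducible S := by
  refine ⟨hS.nonempty, fun U V hU hV hSU hSV => ?_⟩
  refine (hS.sdiff ((h U hU hSU).union (h V hV hSV))).nonempty.mono fun x hx => ?_
  simp only [Set.mem_sdiff, mem_union, not_or, not_and, not_not] at hx
  exact ⟨hx.1, hx.2.1 hx.1, hx.2.2 hx.1⟩

theorem HasCofiniteOpenTraces.subset_closure_diff {S : Set X} (h : HasCofiniteOpenTraces S)
    (hS : S.Infinite) {F : Set X} (hF : F.Finite) : S ⊆ closure (S \ F) := by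
  refine fun x hx => mem_closure_iff.2 fun U hU hxU => ?_
  obtain ⟨y, hyS, hy⟩ := (hS.sdiff (hF.union (h U hU ⟨x, hx, hxU⟩))).nonempty
  simp only [mem_union, Set.mem_sdiff, not_or, not_and, not_not] at hy
  exact ⟨y, hy.2 hyS, hyS, hy.1⟩

theorem Set.Finite.of_forall_exists_isOpen_inter_eq_singleton
    (hcnt : {U : Set X | IsOpen U}.Countable) {D : Set X}
    (hD : ∀ a ∈ D, ∃ U, IsOpen U ∧ U ∩ D = {a}) : D.Finite := by
  choose W hWo hWD using hD
  let Φ : Set D → {U : Set X // IsOpen U} := fun T =>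
    ⟨⋃ a ∈ T, W a a.2, isOpen_biUnion fun a _ => hWo a a.2⟩
  have hΦ : ∀ T, (Φ T).1 ∩ D = (↑) '' T := by
    intro T
    ext y
    simp only [Φ, mem_inter_iff, mem_iUnion, mem_image]
    constructor
    · rintro ⟨⟨a, haT, hya⟩, hyD⟩
      exact ⟨a, haT, ((hWD a a.2).subset ⟨hya, hyD⟩).symm⟩
    · rintro ⟨a, haT, rfl⟩
      exact ⟨⟨a, haT, ((hWD a a.2).superset rfl).1⟩, a.2⟩
  have : Countable {U : Set X // IsOpen U} := hcnt.to_subtype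
  have : Countable (Set D) := Function.Injective.countable (f := Φ) fun T T' h =>
    Subtype.val_injective.image_injective (by rw [← hΦ, ← hΦ, h])
  by_contra hinf
  have : Infinite D := infinite_coe_iff.2 hinf
  obtain ⟨f, hf⟩ := exists_injective_nat (Set D)
  exact Function.cantor_injective _ ((_root_.Infinite.natEmbedding D).injective.comp hf)

theorem IsAntichain.exists_isOpen_inter_eq_singleton {A F : Set X}
    (hA : IsAntichain (· ⤳ ·) A) (hF : F.Finite) (hFA : F ⊆ A) {b : X} (hb : b ∈ F) :
    ∃ W, IsOpen W ∧ W ∩ F = {b} := by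
  refine ⟨(⋃ c ∈ F \ {b}, closure {c})ᶜ,
    (hF.sdiff.isClosed_biUnion fun _ _ => isClosed_closure).isOpen_compl, ?_⟩
  ext c
  simp only [mem_inter_iff, mem_compl_iff, mem_iUnion, Set.mem_sdiff, mem_singleton_iff,
    ← specializes_iff_mem_closure, not_exists]
  constructor
  · rintro ⟨h, hc⟩
    by_contra hcb
    exact h c ⟨hc, hcb⟩ specializes_rfl
  · rintro rfl
    exact ⟨fun c' hc' h => hA (hFA hc'.1) (hFA hb) hc'.2 h, hb⟩

theorem IsAntichain.exists_infinite_subset_hasCofiniteOpenTraces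
    (hcnt : {U : Set X | IsOpen U}.Countable) {A : Set X} (hA : IsAntichain (· ⤳ ·) A)
    (hinf : A.Infinite) : ∃ S ⊆ A, S.Infinite ∧ HasCofiniteOpenTraces S := by
  obtain ⟨B, hBA, hBinf, hB⟩ := hinf.exists_infinite_subset_finite_inter_or_finite_diff hcnt
  let I := {b ∈ B | ∃ U, IsOpen U ∧ U ∩ B = {b}}
  have hI : I.Finite := Set.Finite.of_forall_exists_isOpen_inter_eq_singleton hcnt
    fun b ⟨_, U, hU, hUB⟩ => ⟨U, hU, subset_antisymm
      ((inter_subset_inter_right U (sep_subset B _)).trans hUB.subset)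
      (singleton_subset_iff.2 ⟨((hUB.superset rfl).1), (hUB.superset rfl).2, U, hU, hUB⟩)⟩
  refine ⟨B \ I, sdiff_subset.trans hBA, hBinf.sdiff hI, fun U hU ⟨b, ⟨hbB, hbI⟩, hbU⟩ => ?_⟩
  refine (hB U hU).elim (fun hfin => absurd ?_ hbI)
    fun hcof => hcof.subset (sdiff_subset_sdiff_left sdiff_subset)
  -- a point of `B` in an open set with finite trace on `B` is isolated in `B`
  obtain ⟨W, hW, hWb⟩ :=
    hA.exists_isOpen_inter_eq_singleton hfin (inter_subset_left.trans hBA) ⟨hbB, hbU⟩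
  exact ⟨hbB, W ∩ U, hW.inter hU, by rw [inter_assoc, inter_comm U, hWb]⟩

theorem IsClosed.maxSpec_finite [T0Space X] [QuasiSober X]
    (hcnt : {U : Set X | IsOpen U}.Countable) {C : Set X} (hC : IsClosed C) :
    (maxSpec C).Finite := by
  by_contra hinf
  obtain ⟨S, hSM, hSinf, hS⟩ :=
    (isAntichain_maxSpec C).exists_infinite_subset_hasCofiniteOpenTraces hcnt hinf
  obtain ⟨g, hg⟩ := QuasiSober.sober (hS.isIrreducible hSinf).closure isClosed_closure
  have hgC := hC.closure_subset_iff.2 (fun s hs => (mem_maxSpec_iff.1 (hSM hs)).1) hg.mem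
  refine hSinf (subsingleton_of_forall_eq g fun s hs => ?_).finite
  have hgs := hg.specializes (subset_closure hs)
  exact (hgs.antisymm ((mem_maxSpec_iff.1 (hSM hs)).2 _ hgC hgs)).eq.symm

theorem IsClosed.exists_finset_eq_upS [T0Space X] [QuasiSober X]
    (hcnt : {U : Set X | IsOpen U}.Countable) {C : Set X} (hC : IsClosed C) :
    ∃ F : Finset X, C = UpS (· ⤳ ·) ↑F := by
  refine ⟨(hC.maxSpec_finite hcnt).toFinset, subset_antisymm (fun x hx => ?_) ?_⟩
  · obtain ⟨m, hm, hmx⟩ := hC.exists_mem_maxSpec_specializes hx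
    exact ⟨m, by simpa using hm, hmx⟩
  · rintro y ⟨m, hm, hmy⟩
    exact hmy.mem_closed hC (mem_maxSpec_iff.1 (by simpa using hm)).1

end CountablyManyOpens

section Sequences

variable {X : Type*} [TopologicalSpace X] {C : ℕ → Set X} {y : ℕ → X}

theorem dirOn_range_isLubR_mem_of_forall_lt_specializes (hdcpo : DcpoRel (α := X) (· ⤳ ·))
    (hC : ∀ n, IsClosed (C n)) (hy : ∀ i j, i < j → y i ⤳ y j) (hyC : ∀ n, y n ∈ C n) :
    DirOn (· ⤳ ·) (range y) ∧ ∃ s, IsLubR (· ⤳ ·) (range y) s ∧ ∀ n, s ∈ C n := by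
  have hle : ∀ i j, i ≤ j → y i ⤳ y j := fun i j hij =>
    hij.eq_or_lt.elim (fun h => h ▸ specializes_rfl) (hy i j)
  have hdir : DirOn (· ⤳ ·) (range y) := ⟨range_nonempty y, by
    rintro _ ⟨i, rfl⟩ _ ⟨j, rfl⟩
    exact ⟨y (max i j), mem_range_self _, hle _ _ (le_max_left i j), hle _ _ (le_max_right i j)⟩⟩
  obtain ⟨s, hs⟩ := hdcpo _ hdir
  exact ⟨hdir, s, hs, fun n => (hs.1 _ (mem_range_self n)).mem_closed (hC n) (hyC n)⟩

theorem isIrreducible_range_subset_closure_tails_of_forall_lt_specializes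
    (hy : ∀ i j, i < j → y j ⤳ y i) :
    IsIrreducible (range y) ∧ ∀ n, range y ⊆ closure (y '' Ici n) := by
  have hle : ∀ i j, i ≤ j → y j ⤳ y i := fun i j hij =>
    hij.eq_or_lt.elim (fun h => h ▸ specializes_rfl) (hy i j)
  refine ⟨⟨range_nonempty y, DirectedOn.isPreirreducible ?_⟩, ?_⟩
  · rintro _ ⟨i, rfl⟩ _ ⟨j, rfl⟩
    exact ⟨y (max i j), mem_range_self _, hle _ _ (le_max_left i j), hle _ _ (le_max_right i j)⟩
  · rintro n _ ⟨i, rfl⟩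
    exact (hle i (i + n) (Nat.le_add_right i n)).mem_closed isClosed_closure
      (subset_closure ⟨i + n, Nat.le_add_left n i, rfl⟩)

theorem exists_isIrreducible_subset_closure_tails_of_antichain
    (hcnt : {U : Set X | IsOpen U}.Countable) (hy : ∀ i j, i ≠ j → ¬ y i ⤳ y j) :
    ∃ S ⊆ range y, IsIrreducible S ∧ ∀ n, S ⊆ closure (y '' Ici n) := by
  have hinj : Function.Injective y := fun i j h =>
    by_contra fun hij => hy i j hij (by rw [h])
  have hA : IsAntichain (· ⤳ ·) (range y) := by
    rintro _ ⟨i, rfl⟩ _ ⟨j, rfl⟩ hne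
    exact hy i j (ne_of_apply_ne y hne)
  obtain ⟨S, hSy, hSinf, hS⟩ :=
    hA.exists_infinite_subset_hasCofiniteOpenTraces hcnt (infinite_range_of_injective hinj)
  refine ⟨S, hSy, hS.isIrreducible hSinf, fun n =>
    (hS.subset_closure_diff hSinf ((finite_Iio n).image y)).trans (closure_mono ?_)⟩
  rintro _ ⟨hs, hsn⟩
  obtain ⟨k, rfl⟩ := hSy hs
  exact ⟨k, mem_Ici.2 (not_lt.1 fun hk => hsn ⟨k, hk, rfl⟩), rfl⟩

theorem exists_dirOn_isLubR_mem_of_seq [QuasiSober X] (hcnt : {U : Set X | IsOpen U}.Countable)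
    (hdcpo : DcpoRel (α := X) (· ⤳ ·)) {U : Set X} (hU : IsOpen U) (hC : ∀ n, IsClosed (C n))
    (hCanti : Antitone C) {z : ℕ → X} (hzU : ∀ n, z n ∈ U) (hzC : ∀ n, z n ∈ C n) :
    ∃ D ⊆ U, DirOn (· ⤳ ·) D ∧ ∃ s, IsLubR (· ⤳ ·) D s ∧ ∀ n, s ∈ C n := by
  have hsub : ∀ φ : ℕ → ℕ, StrictMono φ → ∀ n, z (φ n) ∈ C n :=
    fun φ hφ n => hCanti (hφ.id_le n) (hzC _)
  have : IsTrans X (· ⤳ ·) := ⟨fun _ _ _ => Specializes.trans⟩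
  obtain ⟨φ, hφ | hφ⟩ := exists_increasing_or_nonincreasing_subseq (· ⤳ ·) z
  · exact ⟨range (z ∘ φ), range_subset_iff.2 fun n => hzU _,
      dirOn_range_isLubR_mem_of_forall_lt_specializes hdcpo hC hφ (hsub φ φ.strictMono)⟩
  have : IsTrans X (fun a b => b ⤳ a) := ⟨fun _ _ _ h h' => h'.trans h⟩
  obtain ⟨ψ, hψ⟩ := exists_increasing_or_nonincreasing_subseq (fun a b => b ⤳ a) (z ∘ φ)
  -- the subsequence `z ∘ φ ∘ ψ` decreases for `≥` or is an antichain
  obtain ⟨S, hSy, hS, hStail⟩ :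
      ∃ S ⊆ range (z ∘ φ ∘ ψ), IsIrreducible S ∧ ∀ n, S ⊆ closure ((z ∘ φ ∘ ψ) '' Ici n) := by
    rcases hψ with hdec | hnot
    · exact ⟨_, subset_rfl, isIrreducible_range_subset_closure_tails_of_forall_lt_specializes hdec⟩
    · exact exists_isIrreducible_subset_closure_tails_of_antichain hcnt fun i j hij =>
        hij.lt_or_gt.elim (fun h => hφ _ _ (ψ.strictMono h)) (hnot j i)
  obtain ⟨g, hg⟩ := QuasiSober.sober hS.closure isClosed_closure
  obtain ⟨s, hs⟩ := hS.nonempty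
  obtain ⟨k, rfl⟩ := hSy hs
  have htailC : ∀ n, (z ∘ φ ∘ ψ) '' Ici n ⊆ C n := by
    rintro n _ ⟨m, hm, rfl⟩
    exact hCanti hm (hsub _ (φ.strictMono.comp ψ.strictMono) m)
  refine ⟨{g}, singleton_subset_iff.2 ((hg.specializes (subset_closure hs)).mem_open hU (hzU _)),
    dirOn_singleton (fun _ => specializes_rfl) g, g, isLubR_singleton (fun _ => specializes_rfl) g,
    fun n => closure_minimal ((hStail n).trans (closure_minimal (htailC n) (hC n))) (hC n) hg.mem⟩

end Sequences

section OpenSets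

variable {X : Type*} [TopologicalSpace X]

theorem isLubR_iff_eq_biUnion {𝒟 : Set {U : Set X // IsOpen U}} {W : {U : Set X // IsOpen U}} :
    IsLubR (· ≤ ·) 𝒟 W ↔ W.1 = ⋃ d ∈ 𝒟, d.1 := by
  refine ⟨fun h => subset_antisymm ?_ (iUnion₂_subset fun d hd => h.1 d hd), fun h => ?_⟩
  · exact h.2 ⟨_, isOpen_biUnion fun d _ => d.2⟩ fun d hd => subset_biUnion_of_mem (u := (·.1)) hd
  · refine ⟨fun d hd => ?_, fun u hu => ?_⟩
    · change d.1 ⊆ W.1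
      exact h ▸ subset_biUnion_of_mem (u := (·.1)) hd
    · change W.1 ⊆ u.1
      exact h ▸ iUnion₂_subset hu

theorem WB.subset {U V : {U : Set X // IsOpen U}} (h : WB (· ≤ ·) U V) : U.1 ⊆ V.1 := by
  obtain ⟨_, rfl, hUV⟩ := h {V} (dirOn_singleton le_refl V) V (isLubR_singleton le_refl V) le_rfl
  exact hUV

theorem dirOn_setOf_wb (V : {U : Set X // IsOpen U}) : DirOn (· ≤ ·) {U | WB (· ≤ ·) U V} := by
  refine ⟨⟨⟨∅, isOpen_empty⟩, fun D hD _ _ _ => ?_⟩, fun U₁ h₁ U₂ h₂ =>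
    ⟨⟨U₁.1 ∪ U₂.1, U₁.2.union U₂.2⟩, fun D hD s hs hVs => ?_, subset_union_left,
      subset_union_right⟩⟩
  · obtain ⟨d, hd⟩ := hD.1
    exact ⟨d, hd, empty_subset _⟩
  · obtain ⟨d₁, hd₁, hU₁⟩ := h₁ D hD s hs hVs
    obtain ⟨d₂, hd₂, hU₂⟩ := h₂ D hD s hs hVs
    obtain ⟨d, hd, hd₁d, hd₂d⟩ := hD.2 d₁ hd₁ d₂ hd₂
    exact ⟨d, hd, union_subset (hU₁.trans hd₁d) (hU₂.trans hd₂d)⟩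

theorem WB.mem_of_isLubR {U V : {U : Set X // IsOpen U}} (h : WB (· ≤ ·) U V) {D : Set X}
    (hDU : D ⊆ U.1) (hD : DirOn (· ⤳ ·) D) {s : X} (hs : IsLubR (· ⤳ ·) D s) : s ∈ V.1 := by
  by_contra hsV
  let co : X → {U : Set X // IsOpen U} := fun x => ⟨(closure {x})ᶜ, isClosed_closure.isOpen_compl⟩
  have hdir : DirOn (· ≤ ·) (co '' D) := by
    refine ⟨hD.1.image co, ?_⟩
    rintro _ ⟨a, ha, rfl⟩ _ ⟨b, hb, rfl⟩
    obtain ⟨c, hc, hac, hbc⟩ := hD.2 a ha b hb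
    exact ⟨co c, mem_image_of_mem co hc,
      compl_subset_compl.2 (specializes_iff_closure_subset.1 hac),
      compl_subset_compl.2 (specializes_iff_closure_subset.1 hbc)⟩
  -- the upper bounds of `D` are exactly the points of `closure {s}`
  have hlub : IsLubR (· ≤ ·) (co '' D) (co s) := by
    rw [isLubR_iff_eq_biUnion, biUnion_image]
    simp only [co, ← compl_iInter₂]
    congr 1
    ext u
    simp only [mem_iInter₂, ← specializes_iff_mem_closure]
    exact ⟨fun h d hd => (hs.1 d hd).trans h, fun h => hs.2 u h⟩
  have hV : V.1 ⊆ (co s).1 := fun v hv hsv =>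
    hsV ((specializes_iff_mem_closure.2 hsv).mem_open V.2 hv)
  obtain ⟨_, ⟨d, hd, rfl⟩, hUd⟩ := h _ hdir _ hlub hV
  exact hUd (hDU hd) (subset_closure rfl)

theorem wb_of_forall_isLubR_mem [QuasiSober X] (hcnt : {U : Set X | IsOpen U}.Countable)
    (hdcpo : DcpoRel (α := X) (· ⤳ ·)) {U V : {U : Set X // IsOpen U}}
    (h : ∀ D ⊆ U.1, DirOn (· ⤳ ·) D → ∀ s, IsLubR (· ⤳ ·) D s → s ∈ V.1) :
    WB (· ≤ ·) U V := by
  intro 𝒟 h𝒟 W hW hVW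
  by_contra! hU
  have : Countable {U : Set X // IsOpen U} := hcnt.to_subtype
  have : Encodable 𝒟 := Encodable.ofCountable _
  have : Inhabited 𝒟 := ⟨⟨_, h𝒟.1.some_mem⟩⟩
  -- countability turns `𝒟` into a cofinal increasing sequence `w`
  have hdir : Directed (· ≤ ·) ((↑) : 𝒟 → {U : Set X // IsOpen U}) := directedOn_iff_directed.1 h𝒟.2
  let w : ℕ → 𝒟 := hdir.sequence _
  have hz : ∀ n, ∃ z ∈ U.1, z ∈ ((w n).1.1)ᶜ := fun n =>
    not_subset.1 (show ¬ U.1 ⊆ (w n).1.1 from hU _ (w n).2)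
  choose z hzU hzC using hz
  obtain ⟨D, hDU, hD, s, hs, hsC⟩ := exists_dirOn_isLubR_mem_of_seq hcnt hdcpo U.2
    (fun n => (w n).1.2.isClosed_compl)
    (fun _ _ hmn => compl_subset_compl.2 (hdir.sequence_mono hmn))
    hzU hzC
  obtain ⟨d, hd, hsd⟩ := mem_iUnion₂.1 (isLubR_iff_eq_biUnion.1 hW ▸ hVW (h D hDU hD s hs))
  exact hsC _ (hdir.le_sequence ⟨d, hd⟩ hsd)

end OpenSets

section Quasicontinuity

variable {X : Type*} [TopologicalSpace X]

theorem mem_upS_of_mem_finFam {x : X} {F : Finset X} (hF : F ∈ FinFam (· ⤳ ·) x) :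
    x ∈ UpS (· ⤳ ·) ↑F := by
  obtain ⟨_, rfl, hx⟩ := hF {x} (dirOn_singleton (fun _ => specializes_rfl) x) x
    (isLubR_singleton (fun _ => specializes_rfl) x) ⟨x, rfl, specializes_rfl⟩
  exact hx

theorem smythDirected_finFam [T0Space X] [QuasiSober X] (hcnt : {U : Set X | IsOpen U}.Countable)
    (x : X) : SmythDirected (· ⤳ ·) (FinFam (· ⤳ ·) x) := by
  obtain ⟨F₀, hF₀⟩ := isClosed_univ.exists_finset_eq_upS hcnt
  refine ⟨⟨F₀, fun D hD _ _ _ => ?_⟩, fun F hF G hG => ?_⟩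
  · obtain ⟨d, hd⟩ := hD.1
    exact ⟨d, hd, hF₀ ▸ mem_univ d⟩
  obtain ⟨H, hH⟩ := ((isClosed_upS_specializes F.finite_toSet).inter
    (isClosed_upS_specializes G.finite_toSet)).exists_finset_eq_upS hcnt
  have hHFG : (H : Set X) ⊆ UpS (· ⤳ ·) ↑F ∩ UpS (· ⤳ ·) ↑G := hH ▸ subset_upS_specializes _
  refine ⟨H, fun D hD s hs hsx => ?_, fun _ h => (hHFG h).1, fun _ h => (hHFG h).2⟩
  obtain ⟨d₁, hd₁, hd₁F⟩ := hF D hD s hs hsx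
  obtain ⟨d₂, hd₂, hd₂G⟩ := hG D hD s hs hsx
  obtain ⟨d, hd, h₁, h₂⟩ := hD.2 d₁ hd₁ d₂ hd₂
  exact ⟨d, hd, hH ▸ ⟨mem_upS_of_specializes hd₁F h₁, mem_upS_of_specializes hd₂G h₂⟩⟩

theorem quasicontinuousRel_of_continuousRel [T0Space X] [QuasiSober X]
    (hcnt : {U : Set X | IsOpen U}.Countable)
    (hcont : ContinuousRel (α := {U : Set X // IsOpen U}) (· ≤ ·)) :
    QuasicontinuousRel (α := X) (· ⤳ ·) := by
  refine fun x => ⟨smythDirected_finFam hcnt x, subset_antisymm ?_ fun y hy => ?_⟩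
  · rintro y ⟨_, rfl, hxy⟩
    exact mem_iInter₂.2 fun F hF => mem_upS_of_specializes (mem_upS_of_mem_finFam hF) hxy
  by_contra hxy
  let B : {U : Set X // IsOpen U} := ⟨(closure {x})ᶜ, isClosed_closure.isOpen_compl⟩
  have hyB : y ∈ B.1 := by rwa [upS_specializes_singleton] at hxy
  obtain ⟨U, hUB, hyU⟩ := mem_iUnion₂.1 (isLubR_iff_eq_biUnion.1 (hcont B).2 ▸ hyB)
  obtain ⟨G, hG⟩ := U.2.isClosed_compl.exists_finset_eq_upS hcnt
  have hGx : G ∈ FinFam (· ⤳ ·) x := by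
    intro D hD s hs ⟨_, rfl, hxs⟩
    by_contra! hDG
    have hDU : D ⊆ U.1 := fun d hd => not_not.1 fun h => hDG d hd (hG ▸ h)
    exact hUB.mem_of_isLubR hDU hD hs (specializes_iff_mem_closure.1 hxs)
  exact (hG ▸ mem_iInter₂.1 hy G hGx : y ∈ U.1ᶜ) hyU

theorem exists_wb_mem_of_quasicontinuousRel [T0Space X] [QuasiSober X]
    (hcnt : {U : Set X | IsOpen U}.Countable) (hdcpo : DcpoRel (α := X) (· ⤳ ·))
    (hq : QuasicontinuousRel (α := X) (· ⤳ ·)) (V : {U : Set X // IsOpen U}) {w : X}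
    (hw : w ∈ V.1) :
    ∃ U : {U : Set X // IsOpen U}, WB (· ≤ ·) U V ∧ w ∈ U.1 := by
  obtain ⟨G, hG⟩ := V.2.isClosed_compl.exists_finset_eq_upS hcnt
  have hF : ∀ g ∈ G, ∃ F ∈ FinFam (· ⤳ ·) g, w ∉ UpS (· ⤳ ·) (F : Set X) := by
    intro g hg
    have hwg : w ∉ UpS (· ⤳ ·) {g} := fun ⟨_, hg', hgw⟩ =>
      (hG ▸ ⟨g, hg, hg' ▸ hgw⟩ : w ∈ V.1ᶜ) hw
    rw [(hq g).2] at hwg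
    simpa using hwg
  choose! F hFg hwF using hF
  let U : Set X := ⋂ g ∈ G, (UpS (· ⤳ ·) (F g : Set X))ᶜ
  have hU : IsOpen U := isOpen_biInter_finset fun g _ =>
    (isClosed_upS_specializes (F g).finite_toSet).isOpen_compl
  refine ⟨⟨U, hU⟩, wb_of_forall_isLubR_mem hcnt hdcpo fun D hDU hD s hs => ?_, mem_iInter₂.2 hwF⟩
  by_contra hsV
  obtain ⟨g, hg, hgs⟩ : s ∈ UpS (· ⤳ ·) (G : Set X) := hG ▸ hsV
  obtain ⟨d, hd, hdF⟩ := hFg g hg D hD s hs ⟨g, rfl, hgs⟩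
  exact mem_iInter₂.1 (hDU hd) g hg hdF

theorem continuousRel_of_quasicontinuousRel [T0Space X] [QuasiSober X]
    (hcnt : {U : Set X | IsOpen U}.Countable) (hdcpo : DcpoRel (α := X) (· ⤳ ·))
    (hq : QuasicontinuousRel (α := X) (· ⤳ ·)) :
    ContinuousRel (α := {U : Set X // IsOpen U}) (· ≤ ·) := by
  refine fun V => ⟨dirOn_setOf_wb V, isLubR_iff_eq_biUnion.2 (subset_antisymm (fun w hw => ?_)
    (iUnion₂_subset fun U hU => WB.subset hU))⟩
  obtain ⟨U, hUV, hwU⟩ := exists_wb_mem_of_quasicontinuousRel hcnt hdcpo hq V hw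
  exact mem_biUnion hUV hwU

end Quasicontinuity

/-- If `X` is sober with countable open set lattice and `(X, ≥)` is
a dcpo, then `O(X)` is a continuous lattice iff `(X, ≥)` is quasicontinuous. -/
theorem stmt9 {X : Type*} [TopologicalSpace X] [T0Space X] [QuasiSober X]
    (hcnt : {U : Set X | IsOpen U}.Countable)
    (hdcpo : DcpoRel (fun x y : X => sle y x)) :
    ContinuousRel (fun U V : {U : Set X // IsOpen U} => U.1 ⊆ V.1) ↔
      QuasicontinuousRel (fun x y : X => sle y x) := by
  rw [sle_flip_eq_specializes] at hdcpo ⊢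
  exact ⟨quasicontinuousRel_of_continuousRel hcnt, continuousRel_of_quasicontinuousRel hcnt hdcpo⟩
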